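/- Let μ > −1 and k, j ≥ 0 be integers. The complex generalized Zernike polynomials satisfy the three-term relations: (k+j+μ+1) z Q^μ_{k,j}(z,w) = (k+μ+1) Q^μ_{k+1,j}(z,w) + j Q^μ_{k,j−1}(z,w), and (k+j+μ+1) w Q^μ_{k,j}(z,w) = (j+μ+1) Q^μ_{k,j+1}(z,w) + k Q^μ_{k−1,j}(z,w), where the terms with coefficient j (respectively k) are absent when j = 0 (respectively k = 0). These are identities of bivariate polynomials in (z,w). -/

import Mathlib

noncomputable def jacobiP (α β : ℝ) (n : ℕ) : Polynomial ℝ :=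
  (n.factorial : ℝ)⁻¹ •
    ∑ k ∈ Finset.range (n + 1),
      ((n.choose k : ℝ) * ((ascPochhammer ℝ (n - k)).eval ((k : ℝ) + α + 1)) *
          ((ascPochhammer ℝ k).eval ((n : ℝ) + α + β + 1))) •
        ((Polynomial.X - 1) * Polynomial.C (2⁻¹ : ℝ)) ^ k

noncomputable def zernikeQ (μ : ℝ) (k j : ℕ) : MvPolynomial (Fin 2) ℂ :=
  if j ≤ k then
    MvPolynomial.C ((((j.factorial : ℝ) / ((ascPochhammer ℝ j).eval (μ + 1)) : ℝ) : ℂ)) *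
      MvPolynomial.X 0 ^ (k - j) *
      Polynomial.aeval (2 * MvPolynomial.X 0 * MvPolynomial.X 1 - 1)
        (jacobiP μ ((k - j : ℕ) : ℝ) j)
  else
    MvPolynomial.C ((((k.factorial : ℝ) / ((ascPochhammer ℝ k).eval (μ + 1)) : ℝ) : ℂ)) *
      MvPolynomial.X 1 ^ (j - k) *
      Polynomial.aeval (2 * MvPolynomial.X 0 * MvPolynomial.X 1 - 1)
        (jacobiP μ ((j - k : ℕ) : ℝ) k)

/-!
Put `u = z w - 1`. The classical formula
`P_n^{(α,β)}(t) = (α+1)_n / n! · ₂F₁(-n, n+α+β+1; α+1; (1-t)/2)` gives, for `j ≤ k`,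
`Q^μ_{k,j} = z^{k-j} F_j(k+μ+1)(u)` with `F_m(a) = ₂F₁(-m, a; μ+1; -u)`.
For `j ≤ k` the relation for `z Q` is then Gauss's contiguous relation
`(a+m) F_m(a) = a F_m(a+1) + m F_{m-1}(a)`; for `j > k` it is
`(a+m) (u+1) F_m(a) = (μ+1+m) F_{m+1}(a) + (a-μ-1) F_m(a-1)`, because `z w^{j-k} = (u+1) w^{j-k-1}`.
Both are checked coefficientwise. The relation for `w Q` follows from the symmetry
`Q_{k,j}(z,w) = Q_{j,k}(w,z)`.
-/

theorem Nat.cast_add_one_mul_choose_succ {R : Type*} [CommRing R] (m i : ℕ) :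
    ((i : R) + 1) * m.choose (i + 1) = ((m : R) - i) * m.choose i := by
  rcases le_or_gt i m with h | h
  · have := congrArg (Nat.cast : ℕ → R) (Nat.choose_succ_right_eq m i)
    push_cast [Nat.cast_sub h] at this
    linear_combination this
  · simp [Nat.choose_eq_zero_of_lt h, Nat.choose_eq_zero_of_lt (Nat.lt_succ_of_lt h)]

theorem Nat.cast_mul_choose_pred {R : Type*} [CommRing R] (m i : ℕ) :
    (m : R) * (m - 1).choose i = ((m : R) - i) * m.choose i := by
  cases m with
  | zero => rcases i with _ | i <;> simp
  | succ m =>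
    have := congrArg (Nat.cast : ℕ → R) (Nat.add_one_mul_choose_eq m i)
    push_cast at this
    rw [Nat.add_sub_cancel, Nat.cast_succ, this, mul_comm, Nat.cast_add_one_mul_choose_succ,
      Nat.cast_succ]

section Hypergeometric

open Polynomial

theorem ascPochhammer_eval_succ_left {S : Type*} [CommSemiring S] (n : ℕ) (x : S) :
    (ascPochhammer S (n + 1)).eval x = x * (ascPochhammer S n).eval (x + 1) := by
  rw [ascPochhammer_succ_left, eval_mul, eval_X, eval_comp, eval_add, eval_X, eval_one]

theorem ascPochhammer_eval_add {S : Type*} [CommSemiring S] (m n : ℕ) (x : S) :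
    (ascPochhammer S (m + n)).eval x =
      (ascPochhammer S m).eval x * (ascPochhammer S n).eval (x + m) := by
  rw [← ascPochhammer_mul, eval_mul, eval_comp, eval_add, eval_X, eval_natCast]

variable {K : Type*} [Field K]

/-- The terminating hypergeometric polynomial `₂F₁(-m, a; b; -X)`. -/
noncomputable def hypergeomPoly (m : ℕ) (a b : K) : K[X] :=
  ∑ i ∈ Finset.range (m + 1),
    C (m.choose i * (ascPochhammer K i).eval a / (ascPochhammer K i).eval b) * X ^ i

theorem coeff_hypergeomPoly (m : ℕ) (a b : K) (i : ℕ) :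
    (hypergeomPoly m a b).coeff i =
      m.choose i * (ascPochhammer K i).eval a / (ascPochhammer K i).eval b := by
  simp only [hypergeomPoly, finsetSum_coeff, coeff_C_mul_X_pow, Finset.sum_ite_eq,
    Finset.mem_range]
  split_ifs with h
  · rfl
  · rw [Nat.choose_eq_zero_of_lt (by omega), Nat.cast_zero, zero_mul, zero_div]

@[simp]
theorem hypergeomPoly_zero (a b : K) : hypergeomPoly 0 a b = 1 := by
  simp [hypergeomPoly]

theorem hypergeomPoly_contiguous (m : ℕ) (a b : K) :
    C (a + m) * hypergeomPoly m a b =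
      C a * hypergeomPoly m (a + 1) b + C (m : K) * hypergeomPoly (m - 1) a b := by
  ext i
  simp only [coeff_add, coeff_C_mul, coeff_hypergeomPoly, div_eq_mul_inv]
  have hpoch : a * (ascPochhammer K i).eval (a + 1) = (ascPochhammer K i).eval a * (a + i) := by
    rw [← ascPochhammer_eval_succ_left, ascPochhammer_succ_eval]
  linear_combination -(m.choose i : K) * ((ascPochhammer K i).eval b)⁻¹ * hpoch -
    (ascPochhammer K i).eval a * ((ascPochhammer K i).eval b)⁻¹ *
      Nat.cast_mul_choose_pred (R := K) m i

theorem X_add_one_mul_hypergeomPoly {b : K} (hb : ∀ n, (ascPochhammer K n).eval b ≠ 0)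
    (m : ℕ) (a : K) :
    C (a + m) * ((X + 1) * hypergeomPoly m a b) =
      C (b + m) * hypergeomPoly (m + 1) a b + C (a - b) * hypergeomPoly m (a - 1) b := by
  ext n
  cases n with
  | zero => simp [coeff_hypergeomPoly]; ring
  | succ i =>
    simp only [coeff_add, coeff_C_mul, add_mul, one_mul, coeff_X_mul, coeff_hypergeomPoly]
    have hbi : b + i ≠ 0 := by
      have := hb (i + 1)
      rw [ascPochhammer_succ_eval] at this
      exact right_ne_zero_of_mul this
    have hbi' := hb i
    rw [ascPochhammer_eval_succ_left _ (a - 1), sub_add_cancel, ascPochhammer_succ_eval,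
      ascPochhammer_succ_eval, Nat.choose_succ_succ']
    field_simp
    push_cast
    linear_combination (a - b) * (ascPochhammer K i).eval a *
      Nat.cast_add_one_mul_choose_succ (R := K) m i

theorem jacobiP_eq_hypergeomPoly (α β : ℝ) (n : ℕ)
    (hα : (ascPochhammer ℝ n).eval (α + 1) ≠ 0) :
    jacobiP α β n = C ((ascPochhammer ℝ n).eval (α + 1) / n.factorial) *
      (hypergeomPoly n (n + α + β + 1) (α + 1)).comp ((X - 1) * C 2⁻¹) := by
  rw [jacobiP, hypergeomPoly, sum_comp, Finset.mul_sum, Finset.smul_sum]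
  refine Finset.sum_congr rfl fun i hi => ?_
  have hsplit := ascPochhammer_eval_add (S := ℝ) i (n - i) (α + 1)
  rw [Nat.add_sub_cancel' (Nat.lt_succ_iff.1 (Finset.mem_range.1 hi))] at hsplit
  rw [hsplit] at hα ⊢
  simp only [mul_comp, C_comp, X_pow_comp, smul_eq_C_mul, ← mul_assoc, ← C_mul]
  congr 2
  obtain ⟨hα₁, hα₂⟩ := mul_ne_zero_iff.1 hα
  rw [show (i : ℝ) + α + 1 = α + 1 + i by ring]
  field_simp

end Hypergeometric

section Zernike

open MvPolynomial

theorem rename_polynomial_aeval {R S σ τ : Type*} [CommSemiring R] [CommSemiring S] [Algebra R S]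
    (f : σ → τ) (x : MvPolynomial σ S) (p : Polynomial R) :
    rename f (Polynomial.aeval x p) = Polynomial.aeval (rename f x) p :=
  (Polynomial.aeval_algHom_apply ((rename f).restrictScalars R) x p).symm

theorem aeval_two_mul_sub_one {A : Type*} [CommRing A] [Algebra ℝ A] (x : A) :
    Polynomial.aeval (2 * x - 1) ((Polynomial.X - 1) * Polynomial.C 2⁻¹ : Polynomial ℝ) =
      x - 1 := by
  have h2 : algebraMap ℝ A 2⁻¹ * 2 = 1 := by
    rw [← map_ofNat (algebraMap ℝ A) 2, ← map_mul, inv_mul_cancel₀ two_ne_zero, map_one]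
  simp only [map_mul, map_sub, Polynomial.aeval_X, map_one, Polynomial.aeval_C]
  linear_combination (x - 1) * h2

theorem zernikeQ_of_le {μ : ℝ} (hμ : ∀ n, (ascPochhammer ℝ n).eval (μ + 1) ≠ 0)
    {k j : ℕ} (h : j ≤ k) :
    zernikeQ μ k j = X 0 ^ (k - j) *
      Polynomial.aeval (X 0 * X 1 - 1) (hypergeomPoly j ((k : ℝ) + μ + 1) (μ + 1)) := by
  have hk : (j : ℝ) + μ + ((k - j : ℕ) : ℝ) + 1 = k + μ + 1 := by
    push_cast [Nat.cast_sub h]; ring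
  have hc : (C ((j.factorial / (ascPochhammer ℝ j).eval (μ + 1) : ℝ) : ℂ) *
      C (((ascPochhammer ℝ j).eval (μ + 1) / j.factorial : ℝ) : ℂ) :
        MvPolynomial (Fin 2) ℂ) = 1 := by
    rw [← map_mul, ← Complex.ofReal_mul, div_mul_div_cancel₀ (hμ j),
      div_self (Nat.cast_ne_zero.2 j.factorial_ne_zero), Complex.ofReal_one, map_one]
  rw [zernikeQ, if_pos h, jacobiP_eq_hypergeomPoly _ _ _ (hμ j), hk, map_mul,
    Polynomial.aeval_comp, mul_assoc (2 : MvPolynomial (Fin 2) ℂ), aeval_two_mul_sub_one,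
    Polynomial.aeval_C, MvPolynomial.algebraMap_apply, Complex.coe_algebraMap]
  linear_combination (X 0 ^ (k - j) * Polynomial.aeval (X 0 * X 1 - 1 : MvPolynomial (Fin 2) ℂ)
    (hypergeomPoly j ((k : ℝ) + μ + 1) (μ + 1))) * hc

theorem rename_swap_zernikeQ (μ : ℝ) (k j : ℕ) :
    rename (Equiv.swap 0 1) (zernikeQ μ k j) = zernikeQ μ j k := by
  have hs : rename (Equiv.swap (0 : Fin 2) 1) (2 * X 0 * X 1 - 1 : MvPolynomial (Fin 2) ℂ) =
      2 * X 0 * X 1 - 1 := by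
    simp only [map_sub, map_mul, rename_X, map_ofNat, map_one, Equiv.swap_apply_left,
      Equiv.swap_apply_right]
    ring
  unfold zernikeQ
  rcases lt_trichotomy j k with h | rfl | h
  · rw [if_pos h.le, if_neg (not_le.2 h)]
    simp only [map_mul, map_pow, rename_C, rename_X, rename_polynomial_aeval, hs,
      Equiv.swap_apply_left]
  · simp [rename_polynomial_aeval, hs]
  · rw [if_neg (not_le.2 h), if_pos h.le]
    simp only [map_mul, map_pow, rename_C, rename_X, rename_polynomial_aeval, hs,
      Equiv.swap_apply_right]

theorem zernikeQ_of_ge {μ : ℝ} (hμ : ∀ n, (ascPochhammer ℝ n).eval (μ + 1) ≠ 0)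
    {k j : ℕ} (h : k ≤ j) :
    zernikeQ μ k j = X 1 ^ (j - k) *
      Polynomial.aeval (X 0 * X 1 - 1) (hypergeomPoly k ((j : ℝ) + μ + 1) (μ + 1)) := by
  rw [← rename_swap_zernikeQ, zernikeQ_of_le hμ h, map_mul, map_pow, rename_X,
    rename_polynomial_aeval]
  simp only [map_sub, map_mul, rename_X, map_one, Equiv.swap_apply_left, Equiv.swap_apply_right,
    mul_comm (X 1 : MvPolynomial (Fin 2) ℂ)]

theorem X_zero_mul_zernikeQ {μ : ℝ} (hμ : ∀ n, (ascPochhammer ℝ n).eval (μ + 1) ≠ 0)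
    (k j : ℕ) :
    C (((k : ℝ) + j + μ + 1 : ℝ) : ℂ) * (X 0 * zernikeQ μ k j) =
      C (((k : ℝ) + μ + 1 : ℝ) : ℂ) * zernikeQ μ (k + 1) j +
        C ((j : ℝ) : ℂ) * zernikeQ μ k (j - 1) := by
  rcases le_or_gt j k with h | h
  · cases j with
    | zero =>
      simp only [zernikeQ_of_le hμ (Nat.zero_le _), hypergeomPoly_zero, Nat.sub_zero, pow_succ,
        Nat.cast_zero, Complex.ofReal_zero, map_zero, zero_mul, add_zero]
      ring
    | succ j =>
      have h' := congrArg (Polynomial.aeval (X 0 * X 1 - 1 : MvPolynomial (Fin 2) ℂ))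
        (hypergeomPoly_contiguous (j + 1) ((k : ℝ) + μ + 1) (μ + 1))
      simp only [map_add, map_mul, Polynomial.aeval_C, MvPolynomial.algebraMap_apply,
        Complex.coe_algebraMap] at h'
      have hk : ((k + 1 : ℕ) : ℝ) + μ + 1 = k + μ + 1 + 1 := by push_cast; ring
      rw [zernikeQ_of_le hμ h, zernikeQ_of_le hμ (by omega), zernikeQ_of_le hμ (by omega), hk,
        Nat.add_sub_cancel, show k + 1 - (j + 1) = k - j by omega,
        show k - j = k - (j + 1) + 1 by omega]
      push_cast [map_add, map_one] at h' ⊢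
      linear_combination X 0 ^ (k - (j + 1) + 1) * h'
  · have h' := congrArg (Polynomial.aeval (X 0 * X 1 - 1 : MvPolynomial (Fin 2) ℂ))
        (X_add_one_mul_hypergeomPoly hμ k ((j : ℝ) + μ + 1))
    simp only [map_add, map_mul, map_sub, Polynomial.aeval_C, Polynomial.aeval_X, map_one,
      MvPolynomial.algebraMap_apply, Complex.coe_algebraMap, sub_add_cancel] at h'
    have hj : ((j - 1 : ℕ) : ℝ) + μ + 1 = j + μ + 1 - 1 := by
      push_cast [Nat.one_le_iff_ne_zero.2 (by omega : j ≠ 0)]; ring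
    rw [zernikeQ_of_ge hμ h.le, zernikeQ_of_ge hμ h, zernikeQ_of_ge hμ (by omega), hj,
      show j - k = j - (k + 1) + 1 by omega, show j - 1 - k = j - (k + 1) by omega]
    push_cast [map_add, map_one, map_sub] at h' ⊢
    linear_combination X 1 ^ (j - (k + 1)) * h'

end Zernike

open MvPolynomial in
theorem zernike_three_term (μ : ℝ) (hμ : μ > -1) (k j : ℕ) :
    (C ((((k : ℝ) + (j : ℝ) + μ + 1 : ℝ)) : ℂ) * (X 0 * zernikeQ μ k j) =
      C ((((k : ℝ) + μ + 1 : ℝ)) : ℂ) * zernikeQ μ (k + 1) j +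
        C (((j : ℝ)) : ℂ) * zernikeQ μ k (j - 1)) ∧
    (C ((((k : ℝ) + (j : ℝ) + μ + 1 : ℝ)) : ℂ) * (X 1 * zernikeQ μ k j) =
      C ((((j : ℝ) + μ + 1 : ℝ)) : ℂ) * zernikeQ μ k (j + 1) +
        C (((k : ℝ)) : ℂ) * zernikeQ μ (k - 1) j) := by
  have hpoch : ∀ n, (ascPochhammer ℝ n).eval (μ + 1) ≠ 0 := fun n =>
    (ascPochhammer_pos n _ (by linarith)).ne'
  refine ⟨X_zero_mul_zernikeQ hpoch k j, ?_⟩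
  have h := congrArg (rename (Equiv.swap 0 1)) (X_zero_mul_zernikeQ hpoch j k)
  simp only [map_add, map_mul, rename_C, rename_X, rename_swap_zernikeQ,
    Equiv.swap_apply_left] at h
  rwa [add_comm (j : ℝ) k] at h
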